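/- Let {X,N} be a solution of Tsirelson's equation with noise law μ. The following are equivalent: (i) {X,N} is a strong solution; (ii) F^{X,N}_k = F^N_k up to P-null sets for some k ∈ -ℕ; (iii) F^{X,N}_0 = F^N_0 up to P-null sets. -/

import Mathlib

open MeasureTheory ProbabilityTheory Filter Topology
open scoped NNReal ENNReal

universe u v w w₂

noncomputable section

/-- The sub-σ-field generated by the process `Y` from index `k` on; since index `j : ℕ`
stands for time `-j`, this is the σ-field of the past `σ(Y_j : j ≤ -k)`. -/
def past {Ω α : Type*} [MeasurableSpace α] (Y : ℕ → Ω → α) (k : ℕ) : MeasurableSpace Ω :=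
  ⨆ j ≥ k, MeasurableSpace.comap (Y j) inferInstance

/-- A solution of Tsirelson's equation with noise law `μ`.  The index `k : ℕ` stands for the
time `-k ∈ -ℕ`, so that time `k - 1` corresponds to index `k + 1`. -/
structure IsSolution {Ω S G : Type*} [MeasurableSpace Ω] [MeasurableSpace S] [MeasurableSpace G]
    [SMul G S] (P : Measure Ω) (μ : ℕ → Measure G)
    (X : ℕ → Ω → S) (N : ℕ → Ω → G) : Prop where
  measurable_X : ∀ k, Measurable (X k)
  measurable_N : ∀ k, Measurable (N k)
  eqn : ∀ k, X k =ᵐ[P] fun ω => N k ω • X (k + 1) ω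
  indep : ∀ k, Indep (MeasurableSpace.comap (N k) inferInstance)
      (past X (k + 1) ⊔ past N (k + 1)) P
  law_N : ∀ k, P.map (N k) = μ k

/-- The joint law of `(X, N)` on the path space `S^{-ℕ} × Σ^{-ℕ}`. -/
def jointLaw {Ω S G : Type*} [MeasurableSpace Ω] [MeasurableSpace S] [MeasurableSpace G]
    (P : Measure Ω) (X : ℕ → Ω → S) (N : ℕ → Ω → G) : Measure ((ℕ → S) × (ℕ → G)) :=
  P.map fun ω => (fun k => X k ω, fun k => N k ω)

/-- A solution is strong if each `X k` is a.s. equal to a `past N k`-measurable function,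
i.e. `X k` is measurable for the `P`-completion of `σ(N_j : j ≤ -k)`. -/
def IsStrong {Ω S G : Type*} [MeasurableSpace Ω] [MeasurableSpace S] [MeasurableSpace G]
    (P : Measure Ω) (X : ℕ → Ω → S) (N : ℕ → Ω → G) : Prop :=
  ∀ k, ∃ Y : Ω → S, Measurable[past N k] Y ∧ X k =ᵐ[P] Y

/-- Triviality of the tail σ-field `⨅ k, m k`. -/
def TailTrivial {Ω : Type*} [MeasurableSpace Ω] (P : Measure Ω)
    (m : ℕ → MeasurableSpace Ω) : Prop :=
  ∀ A : Set Ω, MeasurableSet[⨅ k, m k] A → P A = 0 ∨ P A = 1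

/-- Convolution `μ * ν` of a measure on the acting semigroup with a measure on the space:
the pushforward of `μ ⊗ ν` under the action map. -/
def conv {G S : Type*} [MeasurableSpace G] [MeasurableSpace S] [SMul G S]
    (μ : Measure G) (ν : Measure S) : Measure S :=
  (μ.prod ν).map fun p => p.1 • p.2

/-- Convolution of two measures on the semigroup. -/
def convG {G : Type*} [MeasurableSpace G] [Mul G] (μ ν : Measure G) : Measure G :=
  (μ.prod ν).map fun p => p.1 * p.2

/-- `prodN N n j = N_n · N_{n+1} · ⋯ · N_{n+j}`; in the time-indexing of the paper (index `m`
is time `-m`) this is `N_{k,l}` with `k = -n` and `l = -(n+j)-1 → -∞` as `j → ∞`. -/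
def prodN {Ω G : Type*} [Mul G] (N : ℕ → Ω → G) (n : ℕ) : ℕ → Ω → G
  | 0 => N n
  | j + 1 => fun ω => prodN N n j ω * N (n + j + 1) ω

/-- `convIter μ n j = μ_n * μ_{n+1} * ⋯ * μ_{n+j}`, the law analogue of `prodN`. -/
def convIter {G : Type*} [MeasurableSpace G] [Mul G] (μ : ℕ → Measure G) (n : ℕ) :
    ℕ → Measure G
  | 0 => μ n
  | j + 1 => convG (convIter μ n j) (μ (n + j + 1))

/-- `sigPow G n` is `Σ^{n+1}`, the set of products of `n+1` elements of `Σ = G`. -/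
def sigPow (G : Type*) [Mul G] : ℕ → Set G
  | 0 => Set.univ
  | n + 1 => Set.image2 (· * ·) (sigPow G n) Set.univ

/-- Two sub-σ-fields are equal up to `P`-null sets. -/
def EqModNull {Ω : Type*} [MeasurableSpace Ω] (P : Measure Ω)
    (m₁ m₂ : MeasurableSpace Ω) : Prop :=
  (∀ A, MeasurableSet[m₁] A → ∃ B, MeasurableSet[m₂] B ∧ P (symmDiff A B) = 0) ∧
  (∀ B, MeasurableSet[m₂] B → ∃ A, MeasurableSet[m₁] A ∧ P (symmDiff A B) = 0)

end

section Context

variable {S : Type u} {G : Type v}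
  [TopologicalSpace S] [CompactSpace S] [TopologicalSpace.MetrizableSpace S]
  [SecondCountableTopology S] [MeasurableSpace S] [BorelSpace S]
  [TopologicalSpace G] [CompactSpace G] [TopologicalSpace.MetrizableSpace G]
  [SecondCountableTopology G] [MeasurableSpace G] [BorelSpace G]
  [Semigroup G] [ContinuousMul G]
  [SMul G S] [ContinuousSMul G S] [IsScalarTower G G S]

end Context

/-!
Say that `F^{X,N}_k ⊆ F^N_k` mod null if every set of `F^{X,N}_k` agrees a.s. with a set of
`F^N_k`; as `F^N_k ⊆ F^{X,N}_k`, this is equality up to null sets. Since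
`F^N_k = σ(N_k) ∨ F^N_{k-1}` and `N_k` is independent of `F^{X,N}_{k-1}`, the conditional
expectation of an `F^{X,N}_{k-1}`-measurable indicator given `F^N_k` equals the one given
`F^N_{k-1}`, so the inclusion at time `k` propagates to all earlier times. There each `X_j` is
a.s. `F^N_j`-measurable (a standard Borel target reduces this to sets), and `X_{j+1} = N_{j+1} X_j`
carries this to later times. Conversely, for a strong solution the inclusion holds at every time.
-/

section NullCompletion

variable {Ω : Type*} {m m₁ m₂ : MeasurableSpace Ω} {mΩ : MeasurableSpace Ω} {P : Measure Ω}

/-- The null sets involved are those of `P` on the ambient σ-algebra and need not be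
`m`-measurable: this is not the completion of `P.trim`. -/
def nullCompletion (P : Measure Ω) (m : MeasurableSpace Ω) : MeasurableSpace Ω where
  MeasurableSet' s := ∃ t, MeasurableSet[m] t ∧ s =ᵐ[P] t
  measurableSet_empty := ⟨∅, .empty, .rfl⟩
  measurableSet_compl := fun _ ⟨t, ht, hst⟩ => ⟨tᶜ, ht.compl, hst.compl⟩
  measurableSet_iUnion := fun _ hs => by
    choose t ht hst using hs
    exact ⟨⋃ i, t i, .iUnion ht, Filter.EventuallyEq.countable_iUnion hst⟩

lemma le_nullCompletion (P : Measure Ω) (m : MeasurableSpace Ω) : m ≤ nullCompletion P m :=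
  fun s hs => ⟨s, hs, .rfl⟩

lemma eqModNull_iff_le_nullCompletion (h : m₂ ≤ m₁) :
    EqModNull P m₁ m₂ ↔ m₁ ≤ nullCompletion P m₂ := by
  refine ⟨fun h' s hs => ?_, fun h' => ⟨fun s hs => ?_, fun t ht => ⟨t, h t ht, by simp⟩⟩⟩
  · obtain ⟨t, ht, hst⟩ := h'.1 s hs
    exact ⟨t, ht, measure_symmDiff_eq_zero_iff.1 hst⟩
  · obtain ⟨t, ht, hst⟩ := h' s hs
    exact ⟨t, ht, measure_symmDiff_eq_zero_iff.2 hst⟩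

lemma comap_le_nullCompletion {β : Type*} [mβ : MeasurableSpace β] {f g : Ω → β}
    (hg : Measurable[m] g) (hfg : f =ᵐ[P] g) : mβ.comap f ≤ nullCompletion P m := by
  rintro _ ⟨s, hs, rfl⟩
  exact ⟨g ⁻¹' s, hg hs, hfg.preimage s⟩

lemma exists_measurable_ae_eq_of_le_nullCompletion_cantor {f : Ω → ℕ → Bool}
    (hf : Measurable[m₁] f) (h : m₁ ≤ nullCompletion P m) :
    ∃ g : Ω → ℕ → Bool, Measurable[m] g ∧ f =ᵐ[P] g := by
  classical
  have hcoord : ∀ n, MeasurableSet[m₁] {ω | f ω n = true} := fun n =>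
    hf (measurable_pi_apply n (measurableSet_singleton true))
  choose E hE hfE using fun n => h _ (hcoord n)
  refine ⟨fun ω n => decide (ω ∈ E n), @measurable_pi_lambda _ _ _ m _ _ fun n =>
    measurable_to_bool (by simpa [Set.preimage] using hE n), ?_⟩
  filter_upwards [ae_all_iff.2 hfE] with ω hω
  funext n
  rw [Bool.eq_iff_iff, decide_eq_true_iff]
  exact Iff.of_eq (hω n)

lemma exists_measurable_ae_eq_of_le_nullCompletion {β : Type*} [MeasurableSpace β]
    [StandardBorelSpace β] [Nonempty β] {f : Ω → β} (hf : Measurable[m₁] f)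
    (h : m₁ ≤ nullCompletion P m) : ∃ g : Ω → β, Measurable[m] g ∧ f =ᵐ[P] g := by
  have he : MeasurableEmbedding (MeasurableSpace.mapNatBool β) :=
    (MeasurableSpace.measurable_mapNatBool β).measurableEmbedding
      (MeasurableSpace.injective_mapNatBool β)
  obtain ⟨r, hr, hre⟩ := he.exists_measurable_extend measurable_id fun _ => ‹Nonempty β›
  obtain ⟨g, hg, hfg⟩ :=
    exists_measurable_ae_eq_of_le_nullCompletion_cantor (he.measurable.comp hf) h
  refine ⟨r ∘ g, hr.comp hg, hfg.mono fun ω hω => ?_⟩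
  simp only [Function.comp_apply, ← hω]
  exact (congrFun hre (f ω)).symm

end NullCompletion

section Independence

variable {Ω E : Type*} [NormedAddCommGroup E] [NormedSpace ℝ E]
  {m₁ F H : MeasurableSpace Ω} {mΩ : MeasurableSpace Ω} {P : Measure Ω}

lemma sup_eq_generateFrom_image2_inter (m₁ m₂ : MeasurableSpace Ω) :
    m₁ ⊔ m₂ = MeasurableSpace.generateFrom
      (Set.image2 (· ∩ ·) {s | MeasurableSet[m₁] s} {t | MeasurableSet[m₂] t}) := by
  refine le_antisymm (sup_le (fun s hs => ?_) (fun t ht => ?_)) (MeasurableSpace.generateFrom_le ?_)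
  · exact .basic _ ⟨s, hs, Set.univ, .univ, Set.inter_univ s⟩
  · exact .basic _ ⟨Set.univ, .univ, t, ht, Set.univ_inter t⟩
  · rintro _ ⟨s, hs, t, ht, rfl⟩
    exact (le_sup_left (b := m₂) s hs).inter (le_sup_right (a := m₁) t ht)

lemma isPiSystem_image2_inter (m₁ m₂ : MeasurableSpace Ω) :
    IsPiSystem (Set.image2 (· ∩ ·) {s | MeasurableSet[m₁] s} {t | MeasurableSet[m₂] t}) := by
  rintro _ ⟨s, hs, t, ht, rfl⟩ _ ⟨s', hs', t', ht', rfl⟩ -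
  exact ⟨s ∩ s', hs.inter hs', t ∩ t', ht.inter ht', (Set.inter_inter_inter_comm s t s' t').symm⟩

lemma setIntegral_eq_of_isPiSystem {m : MeasurableSpace Ω} {π : Set (Set Ω)} (hm : m ≤ mΩ)
    (h_gen : m = MeasurableSpace.generateFrom π) (hπ : IsPiSystem π) (h_univ : Set.univ ∈ π)
    {f g : Ω → E} (hf : Integrable f P) (hg : Integrable g P)
    (h_basic : ∀ s ∈ π, ∫ x in s, f x ∂P = ∫ x in s, g x ∂P)
    {s : Set Ω} (hs : MeasurableSet[m] s) : ∫ x in s, f x ∂P = ∫ x in s, g x ∂P := by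
  induction s, hs using MeasurableSpace.induction_on_inter h_gen hπ with
  | empty => simp
  | basic s hs => exact h_basic s hs
  | compl s hs ih =>
    have h_int := h_basic _ h_univ
    rw [setIntegral_univ, setIntegral_univ] at h_int
    rw [setIntegral_compl (hm s hs) hf, setIntegral_compl (hm s hs) hg, ih, h_int]
  | iUnion s hdisj hs ih =>
    rw [integral_iUnion (fun i => hm _ (hs i)) hdisj hf.integrableOn,
      integral_iUnion (fun i => hm _ (hs i)) hdisj hg.integrableOn]
    exact tsum_congr ih

variable [CompleteSpace E] [IsProbabilityMeasure P]

lemma setIntegral_inter_eq_smul_of_indep (hm₁ : m₁ ≤ mΩ) (hH : H ≤ mΩ) (hind : Indep m₁ H P)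
    {A B : Set Ω} (hA : MeasurableSet[m₁] A) (hB : MeasurableSet[H] B) {f : Ω → E}
    (hf : StronglyMeasurable[H] f) (hfi : Integrable f P) :
    ∫ x in A ∩ B, f x ∂P = P.real A • ∫ x in B, f x ∂P := by
  have hBf : Integrable (B.indicator f) P := hfi.indicator (hH B hB)
  have h_const : P[B.indicator f | m₁] =ᵐ[P] fun _ => ∫ x, B.indicator f x ∂P :=
    condExp_indep_eq hH hm₁ (hf.indicator hB) hind.symm
  rw [← setIntegral_indicator (hH B hB), ← setIntegral_condExp hm₁ hBf hA,
    setIntegral_congr_ae (hm₁ A hA) (h_const.mono fun _ h _ => h), setIntegral_const,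
    integral_indicator (hH B hB)]

lemma condExp_sup_ae_eq_condExp_of_indep (hm₁ : m₁ ≤ mΩ) (hFH : F ≤ H) (hH : H ≤ mΩ)
    (hind : Indep m₁ H P) {f : Ω → E} (hf : StronglyMeasurable[H] f) (hfi : Integrable f P) :
    P[f | m₁ ⊔ F] =ᵐ[P] P[f | F] := by
  have hsup : m₁ ⊔ F ≤ mΩ := sup_le hm₁ (hFH.trans hH)
  refine (ae_eq_condExp_of_forall_setIntegral_eq hsup hfi
    (fun _ _ _ => integrable_condExp.integrableOn) (fun s hs _ => ?_)
    (stronglyMeasurable_condExp.mono (le_sup_right : F ≤ m₁ ⊔ F)).aestronglyMeasurable).symm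
  refine setIntegral_eq_of_isPiSystem hsup (sup_eq_generateFrom_image2_inter m₁ F)
    (isPiSystem_image2_inter m₁ F) ⟨_, .univ, _, .univ, Set.inter_self _⟩
    integrable_condExp hfi ?_ hs
  rintro _ ⟨A, hA, B, hB, rfl⟩
  rw [setIntegral_inter_eq_smul_of_indep hm₁ hH hind hA (hFH B hB)
      (stronglyMeasurable_condExp.mono hFH) integrable_condExp,
    setIntegral_condExp (hFH.trans hH) hfi hB,
    setIntegral_inter_eq_smul_of_indep hm₁ hH hind hA (hFH B hB) hf hfi]

lemma measurableSet_nullCompletion_of_indep (hm₁ : m₁ ≤ mΩ) (hFH : F ≤ H) (hH : H ≤ mΩ)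
    (hind : Indep m₁ H P) {D : Set Ω} (hD : MeasurableSet[H] D)
    (hD' : MeasurableSet[nullCompletion P (m₁ ⊔ F)] D) :
    MeasurableSet[nullCompletion P F] D := by
  obtain ⟨E, hE, hDE⟩ := hD'
  set f : Ω → ℝ := D.indicator 1
  have hsup : m₁ ⊔ F ≤ mΩ := sup_le hm₁ (hFH.trans hH)
  have hfi : Integrable f P := (integrable_const 1).indicator (hH D hD)
  have hf_sup : P[f | m₁ ⊔ F] =ᵐ[P] f := condExp_of_aestronglyMeasurable' hsup
    ⟨E.indicator 1, stronglyMeasurable_const.indicator hE, indicator_ae_eq_of_ae_eq_set hDE⟩ hfi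
  have hf_F : f =ᵐ[P] P[f | F] := hf_sup.symm.trans
    (condExp_sup_ae_eq_condExp_of_indep hm₁ hFH hH hind (stronglyMeasurable_one.indicator hD) hfi)
  refine ⟨P[f | F] ⁻¹' {1}, stronglyMeasurable_condExp.measurable (measurableSet_singleton 1), ?_⟩
  filter_upwards [hf_F] with ω hω
  change (ω ∈ D) = (P[f | F] ω = 1)
  by_cases hωD : ω ∈ D <;> simp [f, hωD, ← hω]

end Independence

lemma standardBorelSpace_of_compactSpace (S : Type*) [TopologicalSpace S] [CompactSpace S]
    [TopologicalSpace.MetrizableSpace S] [MeasurableSpace S] [BorelSpace S] :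
    StandardBorelSpace S := by
  let := TopologicalSpace.metrizableSpaceMetric S
  infer_instance

section Past

variable {Ω α : Type*} [mα : MeasurableSpace α] (Y : ℕ → Ω → α)

lemma comap_le_past {j k : ℕ} (h : k ≤ j) : mα.comap (Y j) ≤ past Y k :=
  le_iSup₂ (f := fun j (_ : j ≥ k) => mα.comap (Y j)) j h

lemma past_mono {k l : ℕ} (h : k ≤ l) : past Y l ≤ past Y k :=
  iSup₂_le fun _ hj => comap_le_past Y (h.trans hj)

lemma measurable_past (k : ℕ) : Measurable[past Y k] (Y k) :=
  measurable_iff_comap_le.2 (comap_le_past Y le_rfl)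

lemma past_le {mΩ : MeasurableSpace Ω} {Y : ℕ → Ω → α} (hY : ∀ j, Measurable (Y j)) (k : ℕ) :
    past Y k ≤ mΩ :=
  iSup₂_le fun j _ => (hY j).comap_le

lemma past_eq_comap_sup_past_succ (n : ℕ) : past Y n = mα.comap (Y n) ⊔ past Y (n + 1) := by
  refine le_antisymm (iSup₂_le fun j hj => ?_)
    (sup_le (comap_le_past Y le_rfl) (past_mono Y n.le_succ))
  rcases hj.eq_or_lt with rfl | h
  · exact le_sup_left
  · exact (comap_le_past Y h).trans le_sup_right

end Past

lemma IsStrong.sup_past_le_nullCompletion {Ω S G : Type*} [MeasurableSpace Ω] [MeasurableSpace S]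
    [MeasurableSpace G] {P : Measure Ω} {X : ℕ → Ω → S} {N : ℕ → Ω → G}
    (h : IsStrong P X N) (n : ℕ) : past X n ⊔ past N n ≤ nullCompletion P (past N n) := by
  refine sup_le (iSup₂_le fun j hj => ?_) (le_nullCompletion P _)
  obtain ⟨Y, hY, hXY⟩ := h j
  exact comap_le_nullCompletion (hY.mono (past_mono N hj) le_rfl) hXY

namespace IsSolution

variable {Ω S G : Type*} [MeasurableSpace Ω] [MeasurableSpace S] [MeasurableSpace G] [SMul G S]
  {P : Measure Ω} {μ : ℕ → Measure G} {X : ℕ → Ω → S} {N : ℕ → Ω → G}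

/-- The noise `N n` is independent of the joint past at `n + 1`, so it cannot help to describe
that past. -/
lemma sup_past_le_nullCompletion_succ [IsProbabilityMeasure P] (hsol : IsSolution P μ X N) {n : ℕ}
    (h : past X n ⊔ past N n ≤ nullCompletion P (past N n)) :
    past X (n + 1) ⊔ past N (n + 1) ≤ nullCompletion P (past N (n + 1)) := by
  intro D hD
  have hD' : MeasurableSet[nullCompletion P (past N n)] D :=
    h D (sup_le_sup (past_mono X n.le_succ) (past_mono N n.le_succ) D hD)
  rw [past_eq_comap_sup_past_succ N n] at hD'
  exact measurableSet_nullCompletion_of_indep (hsol.measurable_N n).comap_le le_sup_right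
    (sup_le (past_le hsol.measurable_X _) (past_le hsol.measurable_N _)) (hsol.indep n) hD hD'

lemma sup_past_le_nullCompletion_of_le [IsProbabilityMeasure P] (hsol : IsSolution P μ X N)
    {k n : ℕ} (hk : past X k ⊔ past N k ≤ nullCompletion P (past N k)) (hkn : k ≤ n) :
    past X n ⊔ past N n ≤ nullCompletion P (past N n) := by
  induction n, hkn using Nat.le_induction with
  | base => exact hk
  | succ n _ ih => exact hsol.sup_past_le_nullCompletion_succ ih

lemma exists_measurable_ae_eq_of_succ [MeasurableSMul₂ G S] (hsol : IsSolution P μ X N) {n : ℕ}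
    (h : ∃ Y : Ω → S, Measurable[past N (n + 1)] Y ∧ X (n + 1) =ᵐ[P] Y) :
    ∃ Y : Ω → S, Measurable[past N n] Y ∧ X n =ᵐ[P] Y := by
  obtain ⟨Y, hY, hXY⟩ := h
  refine ⟨fun ω => N n ω • Y ω,
    (measurable_past N n).smul (hY.mono (past_mono N n.le_succ) le_rfl), ?_⟩
  filter_upwards [hsol.eqn n, hXY] with ω hX hY
  rw [hX, hY]

lemma isStrong_of_le_nullCompletion [IsProbabilityMeasure P] [StandardBorelSpace S]
    [MeasurableSMul₂ G S] (hsol : IsSolution P μ X N) {k : ℕ}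
    (hk : past X k ⊔ past N k ≤ nullCompletion P (past N k)) : IsStrong P X N := by
  have : Nonempty S := (nonempty_of_isProbabilityMeasure P).map (X 0)
  have h_ge : ∀ n, k ≤ n → ∃ Y : Ω → S, Measurable[past N n] Y ∧ X n =ᵐ[P] Y := fun n hkn =>
    exists_measurable_ae_eq_of_le_nullCompletion (measurable_past X n)
      (le_sup_left.trans (hsol.sup_past_le_nullCompletion_of_le hk hkn))
  intro n
  exact Nat.decreasingInduction
    (motive := fun m _ => ∃ Y : Ω → S, Measurable[past N m] Y ∧ X m =ᵐ[P] Y)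
    (fun _ _ h => hsol.exists_measurable_ae_eq_of_succ h)
    (h_ge (n + k) (Nat.le_add_left k n)) (Nat.le_add_right n k)

end IsSolution

section Tsirelson

variable {S : Type u} {G : Type v}
  [TopologicalSpace S] [CompactSpace S] [TopologicalSpace.MetrizableSpace S]
  [SecondCountableTopology S] [MeasurableSpace S] [BorelSpace S]
  [TopologicalSpace G] [CompactSpace G] [TopologicalSpace.MetrizableSpace G]
  [SecondCountableTopology G] [MeasurableSpace G] [BorelSpace G]
  [Semigroup G] [ContinuousMul G]
  [SMul G S] [ContinuousSMul G S] [IsScalarTower G G S]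

theorem tsirelson_strong_iff_sigma_fields_general
    {Ω : Type w} [MeasurableSpace Ω] (P : Measure Ω) [IsProbabilityMeasure P]
    (μ : ℕ → Measure G)
    (X : ℕ → Ω → S) (N : ℕ → Ω → G) (hsol : IsSolution P μ X N) :
    (IsStrong P X N ↔ ∃ k, EqModNull P (past X k ⊔ past N k) (past N k)) ∧
    ((∃ k, EqModNull P (past X k ⊔ past N k) (past N k)) ↔
      EqModNull P (past X 0 ⊔ past N 0) (past N 0)) := by
  have := standardBorelSpace_of_compactSpace S
  simp only [eqModNull_iff_le_nullCompletion le_sup_right]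
  exact ⟨⟨fun h => ⟨0, h.sup_past_le_nullCompletion 0⟩,
      fun ⟨_, hk⟩ => hsol.isStrong_of_le_nullCompletion hk⟩,
    ⟨fun ⟨_, hk⟩ => (hsol.isStrong_of_le_nullCompletion hk).sup_past_le_nullCompletion 0,
      fun h => ⟨0, h⟩⟩⟩

/-- For a solution `{X,N}`, the following are equivalent:
(i) `{X,N}` is strong; (ii) `F^{X,N}_k = F^N_k` up to `P`-null sets for some `k`;
(iii) `F^{X,N}_0 = F^N_0` up to `P`-null sets. -/
theorem tsirelson_strong_iff_sigma_fields
    {Ω : Type w} [MeasurableSpace Ω] (P : Measure Ω) [IsProbabilityMeasure P]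
    (μ : ℕ → Measure G) (hμ : ∀ k, IsProbabilityMeasure (μ k))
    (X : ℕ → Ω → S) (N : ℕ → Ω → G) (hsol : IsSolution P μ X N) :
    (IsStrong P X N ↔ ∃ k, EqModNull P (past X k ⊔ past N k) (past N k)) ∧
    ((∃ k, EqModNull P (past X k ⊔ past N k) (past N k)) ↔
      EqModNull P (past X 0 ⊔ past N 0) (past N 0)) :=
  tsirelson_strong_iff_sigma_fields_general P μ X N hsol

end Tsirelson
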